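/- arXiv:2105.10184 — 4 statements merged into one kernel-verified Lean document; each statement's English description precedes it below -/
import Mathlib

section
/- If a graph G contains a walk of length h (in the graph with a loop added at each vertex) such that each vertex of G appears at most r times on the walk, then the treedepth of G is at least ⌈log_{r+1}(h+2)⌉. -/
open scoped Classical

variable {V : Type*}

/-- Reachability within a vertex subset `s` of `G` (walks staying inside `s`). -/
def reachIn (G : SimpleGraph V) (s : Finset V) (x y : V) : Prop :=
  Relation.ReflTransGen (fun a b => a ∈ s ∧ b ∈ s ∧ G.Adj a b) x y

/-- The induced subgraph of `G` on `s` is connected. -/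
def connOn (G : SimpleGraph V) (s : Finset V) : Prop :=
  ∀ x ∈ s, ∀ y ∈ s, reachIn G s x y

/-- The connected component of `v` in the induced subgraph of `G` on `s`. -/
noncomputable def compOf [DecidableEq V] (G : SimpleGraph V) (s : Finset V) (v : V) : Finset V :=
  s.filter (fun u => reachIn G s v u)

/-- Fueled recursive definition of treedepth of the induced subgraph on `s`. -/
noncomputable def tdAux [DecidableEq V] (G : SimpleGraph V) : ℕ → Finset V → ℕ
  | 0, s => s.card
  | n + 1, s =>
    if h : s.card ≤ 1 then s.card
    else if connOn G s then
      1 + s.inf' (Finset.card_pos.mp (by omega)) (fun v => tdAux G n (s.erase v))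
    else
      s.sup (fun v => tdAux G n (compOf G s v))

/-- Treedepth of the induced subgraph of `G` on `s`. -/
noncomputable def tdOn [DecidableEq V] (G : SimpleGraph V) (s : Finset V) : ℕ :=
  tdAux G s.card s

/-- Treedepth of a finite graph `G`. -/
noncomputable def treedepth [Fintype V] [DecidableEq V] (G : SimpleGraph V) : ℕ :=
  tdOn G Finset.univ

/-!
Induct on the vertex set `s` containing the walk. A walk stays inside one component of `s`, whose
treedepth is at most that of `s`. If `s` is connected, delete a vertex `v` realising its treedepth:
the at most `r` visits to `v` cut the walk into at most `r + 1` runs avoiding `v`, and by induction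
each run has length `ℓ` with `ℓ + 1 ≤ (r + 1) ^ td(s - v)`. Summing,
`h + 2 ≤ (r + 1) ^ (td(s - v) + 1) = (r + 1) ^ td(s)`.
-/

open Finset

section Treedepth

variable {G : SimpleGraph V} {s : Finset V}

lemma reachIn_symm {x y : V} (h : reachIn G s x y) : reachIn G s y x := by
  induction h with
  | refl => exact .refl
  | tail _ hbc ih => exact .head ⟨hbc.2.1, hbc.1, hbc.2.2.symm⟩ ih

lemma connOn_of_card_le_one (hs : #s ≤ 1) : connOn G s := fun x hx y hy =>
  card_le_one.mp hs x hx y hy ▸ .refl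

variable [DecidableEq V]

lemma connOn_of_compOf_eq {v : V} (h : compOf G s v = s) : connOn G s := by
  intro x hx y hy
  rw [← h] at hx hy
  exact (reachIn_symm (mem_filter.mp hx).2).trans (mem_filter.mp hy).2

lemma compOf_ssubset (hs : ¬ connOn G s) (v : V) : compOf G s v ⊂ s :=
  Finset.ssubset_iff_subset_ne.mpr ⟨filter_subset _ _, fun h => hs (connOn_of_compOf_eq h)⟩

lemma tdAux_eq_of_card_le {n m : ℕ} (hn : #s ≤ n) (hm : #s ≤ m) :
    tdAux G n s = tdAux G m s := by
  induction n generalizing m s with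
  | zero => cases m <;> simp [tdAux, Nat.le_zero.mp hn]
  | succ n ih =>
    rcases m with _ | m
    · simp [tdAux, Nat.le_zero.mp hm]
    by_cases h1 : #s ≤ 1
    · simp [tdAux, h1]
    rw [tdAux, tdAux, dif_neg h1, dif_neg h1]
    split_ifs with hc
    · congr 1
      refine inf'_congr _ rfl fun v hv => ?_
      have := card_erase_of_mem hv
      exact ih (by omega) (by omega)
    · refine sup_congr rfl fun v _ => ?_
      have := card_lt_card (compOf_ssubset hc v)
      exact ih (by omega) (by omega)

lemma tdOn_eq_tdAux {n : ℕ} (h : #s ≤ n) : tdOn G s = tdAux G n s :=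
  tdAux_eq_of_card_le le_rfl h

lemma tdOn_singleton (u : V) : tdOn G {u} = 1 := by
  simp [tdOn, tdAux]

lemma exists_tdOn_eq_tdOn_erase_add_one (hs : 1 < #s) (hc : connOn G s) :
    ∃ v ∈ s, tdOn G s = tdOn G (s.erase v) + 1 := by
  obtain ⟨n, hn⟩ : ∃ n, #s = n + 1 := ⟨#s - 1, by omega⟩
  have hne : s.Nonempty := card_pos.mp (by omega)
  obtain ⟨v, hv, hmin⟩ := exists_mem_eq_inf' hne fun v => tdAux G n (s.erase v)
  refine ⟨v, hv, ?_⟩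
  have herase : #(s.erase v) ≤ n := by rw [card_erase_of_mem hv]; omega
  rw [tdOn_eq_tdAux hn.le, tdAux, dif_neg (by omega), if_pos hc, hmin, tdOn_eq_tdAux herase,
    add_comm]

lemma tdOn_compOf_le (hc : ¬ connOn G s) {v : V} (hv : v ∈ s) :
    tdOn G (compOf G s v) ≤ tdOn G s := by
  have hs : 1 < #s := by
    by_contra! hs
    exact hc (connOn_of_card_le_one hs)
  obtain ⟨n, hn⟩ : ∃ n, #s = n + 1 := ⟨#s - 1, by omega⟩
  have hcomp : #(compOf G s v) ≤ n := by
    have := card_lt_card (compOf_ssubset hc v)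
    omega
  rw [tdOn_eq_tdAux hcomp, tdOn_eq_tdAux hn.le, tdAux, dif_neg (by omega), if_neg hc]
  exact le_sup (f := fun v => tdAux G n (compOf G s v)) hv

end Treedepth

theorem add_two_le_mul_of_runs_le (P : ℕ → Prop) [DecidablePred P] {h B : ℕ}
    (hrun : ∀ a ℓ, a + ℓ ≤ h + 1 → (∀ i < ℓ, ¬ P (a + i)) → ℓ + 1 ≤ B) :
    h + 2 ≤ (#{i ∈ range (h + 1) | P i} + 1) * B := by
  -- invariant: `[0, n)` costs `B` per position satisfying `P`, plus its trailing run `ℓ`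
  suffices ∀ n ≤ h + 1, ∃ ℓ ≤ n, (∀ i < ℓ, ¬ P (n - ℓ + i)) ∧
      n + 1 ≤ #{i ∈ range n | P i} * B + ℓ + 1 by
    obtain ⟨ℓ, hℓ, htail, hn⟩ := this (h + 1) le_rfl
    have := hrun (h + 1 - ℓ) ℓ (by omega) htail
    rw [add_mul, one_mul]
    omega
  intro n hn
  induction n with
  | zero => exact ⟨0, le_rfl, by simp, by simp⟩
  | succ n ih =>
    obtain ⟨ℓ, hℓ, htail, hcount⟩ := ih (by omega)
    rw [range_add_one, filter_insert]
    by_cases hP : P n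
    · have := hrun (n - ℓ) ℓ (by omega) htail
      refine ⟨0, by omega, by simp, ?_⟩
      rw [if_pos hP, card_insert_of_notMem (by simp), add_mul, one_mul]
      omega
    · refine ⟨ℓ + 1, by omega, fun i hi => ?_, by rw [if_neg hP]; omega⟩
      rcases Nat.lt_succ_iff_lt_or_eq.mp hi with hi | rfl
      · rw [show n + 1 - (ℓ + 1) + i = n - ℓ + i by omega]
        exact htail i hi
      · rwa [show n + 1 - (i + 1) + i = n by omega]

section Walks

variable {G : SimpleGraph V} [DecidableEq V]

lemma card_filter_shift_le (w : ℕ → V) {a m h : ℕ} (ham : a + m ≤ h) (u : V) :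
    #{i ∈ range (m + 1) | w (a + i) = u} ≤ #{i ∈ range (h + 1) | w i = u} := by
  refine card_le_card_of_injOn (a + ·) (fun i hi => ?_) fun x _ y _ => Nat.add_left_cancel
  simp only [coe_filter, mem_range, Set.mem_ofPred_eq] at hi ⊢
  exact ⟨by omega, hi.2⟩

lemma walk_mem_compOf {s : Finset V} {h : ℕ} {w : ℕ → V} (hmem : ∀ i ≤ h, w i ∈ s)
    (hwalk : ∀ i < h, w i = w (i + 1) ∨ G.Adj (w i) (w (i + 1))) :
    ∀ i ≤ h, w i ∈ compOf G s (w 0) := by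
  intro i hi
  induction i with
  | zero => exact mem_filter.mpr ⟨hmem 0 hi, .refl⟩
  | succ i ih =>
    have hwi := ih (by omega)
    rcases hwalk i (by omega) with heq | hadj
    · rwa [← heq]
    · exact mem_filter.mpr ⟨hmem _ hi,
        (mem_filter.mp hwi).2.tail ⟨hmem i (by omega), hmem _ hi, hadj⟩⟩

theorem add_two_le_pow_tdOn (s : Finset V) {h r : ℕ} {w : ℕ → V}
    (hmem : ∀ i ≤ h, w i ∈ s)
    (hwalk : ∀ i < h, w i = w (i + 1) ∨ G.Adj (w i) (w (i + 1)))
    (happ : ∀ v, #{i ∈ range (h + 1) | w i = v} ≤ r) :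
    h + 2 ≤ (r + 1) ^ tdOn G s := by
  induction s using Finset.strongInduction generalizing h w with
  | H s ih =>
  by_cases hs : #s ≤ 1
  · have hs1 : #s = 1 := le_antisymm hs (card_pos.mpr ⟨w 0, hmem 0 h.zero_le⟩)
    obtain ⟨u, rfl⟩ := card_eq_one.mp hs1
    have hconst : {i ∈ range (h + 1) | w i = u} = range (h + 1) :=
      filter_true_of_mem fun i hi =>
        mem_singleton.mp (hmem i (Nat.lt_succ_iff.mp (mem_range.mp hi)))
    have := happ u
    rw [hconst, card_range] at this
    rw [tdOn_singleton, pow_one]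
    omega
  by_cases hc : connOn G s
  · obtain ⟨v, hv, htd⟩ := exists_tdOn_eq_tdOn_erase_add_one (not_le.mp hs) hc
    rw [htd, pow_succ, mul_comm]
    refine (add_two_le_mul_of_runs_le (w · = v) fun a ℓ haℓ hfree => ?_).trans
      (Nat.mul_le_mul_right _ (Nat.succ_le_succ (happ v)))
    rcases ℓ with _ | m
    · exact Nat.one_le_pow _ _ r.succ_pos
    refine ih _ (erase_ssubset hv) (h := m) (w := (w <| a + ·)) (fun i hi => ?_)
      (fun i hi => ?_) fun u => (card_filter_shift_le w (by omega) u).trans (happ u)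
    · exact mem_erase.mpr ⟨hfree i (by omega), hmem _ (by omega)⟩
    · simpa only [add_assoc] using hwalk (a + i) (by omega)
  · exact (ih _ (compOf_ssubset hc (w 0)) (walk_mem_compOf hmem hwalk) hwalk happ).trans
      (Nat.pow_le_pow_right r.succ_pos (tdOn_compOf_le hc (hmem 0 h.zero_le)))

end Walks

/-- If a graph `G` contains a walk of length `h` (in the graph with a loop added at
each vertex) on which each vertex appears at most `r` times, then
`td(G) ≥ ⌈log_{r+1}(h+2)⌉`. -/
theorem walk_treedepth_bound {V : Type*} [Fintype V] [DecidableEq V]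
    (G : SimpleGraph V) (h r : ℕ) (w : ℕ → V)
    (hwalk : ∀ i < h, w i = w (i + 1) ∨ G.Adj (w i) (w (i + 1)))
    (happ : ∀ v : V, ((Finset.range (h + 1)).filter (fun i => w i = v)).card ≤ r) :
    ⌈Real.logb ((r : ℝ) + 1) ((h : ℝ) + 2)⌉ ≤ (treedepth G : ℤ) := by
  have hkey : h + 2 ≤ (r + 1) ^ treedepth G :=
    add_two_le_pow_tdOn univ (fun i _ => mem_univ (w i)) hwalk happ
  have hr : 0 < r := by
    by_contra! hr
    simp [Nat.le_zero.mp hr] at hkey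
  have hbase : (1 : ℝ) < r + 1 := by simp [hr]
  rw [Int.ceil_le, Int.cast_natCast, Real.logb_le_iff_le_rpow hbase (by positivity),
    Real.rpow_natCast]
  exact_mod_cast hkey
end

section
/- Removing a vertex u that appears exactly q times on a walk w of length h (in a graph with loops added at each vertex) splits w into q+1 subwalks avoiding u, and the longest of these subwalks has length at least (h+2)/(q+1) − 2. -/
/-!
The `q` occurrences of `u` cut the index range `[0, h]` into `q + 1` gaps avoiding `u`, of
total size `h + 1 - q`, so the largest gap `L` satisfies `(q + 1) * (L + 1) ≥ h + 2`.
By strong induction on the range, cut at the last occurrence `m`: either the final gap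
`(m, n)` or the best gap inside `[0, m)` is long enough.
-/

namespace Nat

lemma exists_last_of_exists_lt {p : ℕ → Prop} {n : ℕ} (h : ∃ m < n, p m) :
    ∃ m < n, p m ∧ ∀ i, m < i → i < n → ¬p i := by
  induction n with
  | zero => simp at h
  | succ n ih =>
    by_cases hn : p n
    · exact ⟨n, n.lt_succ_self, hn, fun i hi hin => by omega⟩
    · obtain ⟨m, hm, hpm⟩ := h
      have hmn : m < n := lt_of_le_of_ne (by omega) (by rintro rfl; exact hn hpm)
      obtain ⟨k, hk, hpk, hlast⟩ := ih ⟨m, hmn, hpm⟩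
      refine ⟨k, by omega, hpk, fun i hki hin => ?_⟩
      rcases Nat.lt_succ_iff_lt_or_eq.mp hin with hin | rfl
      exacts [hlast i hki hin, hn]

lemma count_eq_count_add_one_of_last {p : ℕ → Prop} [DecidablePred p] {m n : ℕ}
    (hmn : m < n) (hpm : p m) (hlast : ∀ i, m < i → i < n → ¬p i) :
    count p n = count p m + 1 := by
  obtain ⟨k, rfl⟩ : ∃ k, n = m + 1 + k := ⟨n - (m + 1), by omega⟩
  rw [count_add, count_succ_eq_succ_count hpm, count_of_forall_not fun i hi =>
    hlast (m + 1 + i) (by omega) (by omega), add_zero]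

theorem exists_long_gap (p : ℕ → Prop) [DecidablePred p] (n : ℕ) :
    ∃ a b, a ≤ b ∧ b ≤ n ∧ (∀ i, a ≤ i → i < b → ¬p i) ∧
      n + 1 ≤ (count p n + 1) * (b - a + 1) := by
  induction n using Nat.strong_induction_on with
  | _ n ih =>
  by_cases hp : ∃ m < n, p m
  · obtain ⟨m, hmn, hpm, hlast⟩ := exists_last_of_exists_lt hp
    obtain ⟨a, b, hab, hbm, hgap, hlong⟩ := ih m hmn
    rw [count_eq_count_add_one_of_last hmn hpm hlast]
    obtain ⟨k, rfl⟩ : ∃ k, n = m + 1 + k := ⟨n - (m + 1), by omega⟩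
    obtain ⟨l, rfl⟩ : ∃ l, b = a + l := ⟨b - a, by omega⟩
    rw [Nat.add_sub_cancel_left] at hlong
    rcases le_total k l with hkl | hlk
    · refine ⟨a, a + l, hab, by omega, hgap, ?_⟩
      rw [Nat.add_sub_cancel_left]
      nlinarith
    · refine ⟨m + 1, m + 1 + k, by omega, le_rfl, hlast, ?_⟩
      rw [Nat.add_sub_cancel_left]
      nlinarith
  · push Not at hp
    exact ⟨0, n, n.zero_le, le_rfl, fun i _ hi => hp i hi, by rw [count_of_forall_not hp]; omega⟩

end Nat

theorem walk_remove_vertex_long_subwalk_general {V : Type*} [DecidableEq V]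
    (h q : ℕ) (w : ℕ → V) (u : V)
    (hq : ((Finset.range (h + 1)).filter (fun i => w i = u)).card = q) :
    ∃ a b : ℕ, a ≤ b ∧ b ≤ h + 1 ∧ (∀ i, a ≤ i → i < b → w i ≠ u) ∧
      ((h : ℝ) + 2) / ((q : ℝ) + 1) - 2 ≤ (b : ℝ) - (a : ℝ) - 1 := by
  obtain ⟨a, b, hab, hb, hgap, hlong⟩ := Nat.exists_long_gap (fun i => w i = u) (h + 1)
  rw [Nat.count_eq_card_filter_range, hq] at hlong
  refine ⟨a, b, hab, hb, hgap, ?_⟩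
  have hlong_real : (h : ℝ) + 2 ≤ (q + 1) * ((b : ℝ) - a + 1) := by
    rw [← Nat.cast_sub hab]
    exact_mod_cast hlong
  have : ((h : ℝ) + 2) / (q + 1) ≤ b - a + 1 := by
    rw [div_le_iff₀ (by positivity)]
    linarith
  linarith

/-- Removing a vertex `u` that appears exactly `q` times on a walk `w` of length `h`
(in a graph with loops added at each vertex) splits `w` into `q+1` subwalks avoiding
`u`, and the longest of these subwalks has length at least `(h+2)/(q+1) − 2`.
A (possibly empty) contiguous block `[a, b)` of indices avoiding `u` has `b - a`
vertices, i.e. it is a subwalk of length `b - a - 1`. -/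
theorem walk_remove_vertex_long_subwalk {V : Type*} [DecidableEq V]
    (G : SimpleGraph V) (h q : ℕ) (w : ℕ → V) (u : V)
    (hwalk : ∀ i < h, w i = w (i + 1) ∨ G.Adj (w i) (w (i + 1)))
    (hq : ((Finset.range (h + 1)).filter (fun i => w i = u)).card = q) :
    ∃ a b : ℕ, a ≤ b ∧ b ≤ h + 1 ∧ (∀ i, a ≤ i → i < b → w i ≠ u) ∧
      ((h : ℝ) + 2) / ((q : ℝ) + 1) - 2 ≤ (b : ℝ) - (a : ℝ) - 1 :=
  walk_remove_vertex_long_subwalk_general h q w u hq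
end

section
/- Suppose an n-vertex graph G has a vertex cover C of size k, and every vertex v ∈ V satisfies f_1(v) ≤ deg(v) + 1 and f_2(v) ≤ deg(v), where for vertices in the initial seed sets f_2(v) ≤ deg(v) holds. If the additional seed sets are chosen as T_a = C \ S_a and T_b = C \ S_b, then after the two-opinion activation process stabilizes, every vertex either has both opinions or neither: specifically, every vertex v ∈ C has both opinions from round 0; every vertex v ∉ C with v ∈ S_a ∪ S_b acquires the second opinion; and every vertex v ∉ C ∪ S_a ∪ S_b with f_1(v) ≤ deg(v) acquires both opinions, while those with f_1(v) = deg(v)+1 acquire neither. -/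
/-!
A vertex outside the vertex cover `C` has all of its neighbours in `C`, and `C` holds both
opinions from round 0, so such a vertex always sees its full degree. Hence after one round both
opinion sets equal `C ∪ S_a ∪ S_b ∪ {v | f₁ v ≤ deg v}` (a seed of one opinion adopts the other
because `f₂ ≤ deg` on seeds), and this set is a fixed point of the update.
-/

open scoped Classical

variable {V : Type*}

/-- Number of neighbors of `v` that lie in `s`. -/
noncomputable def nbrCount [Fintype V] (G : SimpleGraph V) (s : Finset V) (v : V) : ℕ :=
  (s.filter fun u => G.Adj v u).card

/-- One update step for one opinion: `Pc` is the set holding this opinion,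
`Pnc` the set holding the other opinion. -/
noncomputable def updOp [Fintype V] (G : SimpleGraph V) (f1 f2 : V → ℕ)
    (Pc Pnc : Finset V) : Finset V :=
  Pc ∪ Finset.univ.filter (fun v =>
    (v ∉ Pc ∧ v ∉ Pnc ∧ f1 v ≤ nbrCount G Pc v) ∨ (v ∈ Pnc ∧ f2 v ≤ nbrCount G Pc v))

/-- The two-opinion activation process: `(proc2 G f1 f2 Pa0 Pb0 i).1` is `P_a^i`
and `.2` is `P_b^i`. -/
noncomputable def proc2 [Fintype V] (G : SimpleGraph V) (f1 f2 : V → ℕ)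
    (Pa0 Pb0 : Finset V) : ℕ → Finset V × Finset V
  | 0 => (Pa0, Pb0)
  | n + 1 =>
    let p := proc2 G f1 f2 Pa0 Pb0 n
    (updOp G f1 f2 p.1 p.2, updOp G f1 f2 p.2 p.1)

/-- Selector for an opinion: `true` is opinion `a`, `false` is opinion `b`. -/
noncomputable def procSel [Fintype V] (G : SimpleGraph V) (f1 f2 : V → ℕ)
    (Pa0 Pb0 : Finset V) (c : Bool) (i : ℕ) : Finset V :=
  if c then (proc2 G f1 f2 Pa0 Pb0 i).1 else (proc2 G f1 f2 Pa0 Pb0 i).2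

/-- The single-opinion target set activation process. -/
noncomputable def sproc [Fintype V] (G : SimpleGraph V) (f : V → ℕ)
    (T : Finset V) : ℕ → Finset V
  | 0 => T
  | n + 1 =>
    let P := sproc G f T n
    P ∪ Finset.univ.filter (fun v => v ∉ P ∧ f v ≤ nbrCount G P v)

/-- Both opinion sets of the seeded process equal this set from round 1 on. -/
noncomputable def coverClosure [Fintype V] (G : SimpleGraph V) [DecidableRel G.Adj] (f1 : V → ℕ)
    (C S : Finset V) : Finset V :=
  Finset.univ.filter fun v => v ∈ C ∨ v ∈ S ∨ f1 v ≤ G.degree v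

section VertexCover

variable [Fintype V] (G : SimpleGraph V) [DecidableRel G.Adj] {f1 f2 : V → ℕ} {C : Finset V}

theorem mem_coverClosure {S : Finset V} {v : V} :
    v ∈ coverClosure G f1 C S ↔ v ∈ C ∨ v ∈ S ∨ f1 v ≤ G.degree v := by
  simp [coverClosure]

theorem nbrCount_eq_degree {s : Finset V} {v : V} (h : ∀ u, G.Adj v u → u ∈ s) :
    nbrCount G s v = G.degree v := by
  rw [← SimpleGraph.card_neighborFinset_eq_degree, nbrCount]
  congr 1
  ext u
  simp only [Finset.mem_filter, SimpleGraph.mem_neighborFinset]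
  exact ⟨And.right, fun hvu => ⟨h u hvu, hvu⟩⟩

/-- A vertex outside the cover `C` has all of its neighbours in `Pc ⊇ C`, so only its own
state and its thresholds decide its update. -/
theorem mem_updOp_of_cover (hC : G.IsVertexCover C) {Pc Pnc : Finset V}
    (hPc : C ⊆ Pc) {v : V} :
    v ∈ updOp G f1 f2 Pc Pnc ↔
      v ∈ Pc ∨ (v ∉ Pnc ∧ f1 v ≤ G.degree v) ∨ (v ∈ Pnc ∧ f2 v ≤ G.degree v) := by
  simp only [updOp, Finset.mem_union, Finset.mem_filter, Finset.mem_univ, true_and]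
  by_cases hvC : v ∈ C
  · simp [hPc hvC]
  · rw [nbrCount_eq_degree G fun u hvu => hPc ((hC hvu).resolve_left hvC)]
    tauto

theorem updOp_seed_eq_coverClosure [DecidableEq V] (hC : G.IsVertexCover C)
    {Sa Sb : Finset V} (hf2 : ∀ v ∈ Sb, f2 v ≤ G.degree v) :
    updOp G f1 f2 (Sa ∪ (C \ Sa)) (Sb ∪ (C \ Sb)) = coverClosure G f1 C (Sa ∪ Sb) := by
  ext v
  rw [mem_updOp_of_cover G hC (by simp), mem_coverClosure]
  simp only [Finset.union_sdiff_self_eq_union, Finset.mem_union]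
  have := hf2 v
  tauto

theorem updOp_coverClosure (hC : G.IsVertexCover C) (S : Finset V) :
    updOp G f1 f2 (coverClosure G f1 C S) (coverClosure G f1 C S) = coverClosure G f1 C S := by
  ext v
  rw [mem_updOp_of_cover G hC fun u hu => (mem_coverClosure G).2 (Or.inl hu)]
  simp only [mem_coverClosure]
  tauto

end VertexCover

theorem proc2_add_of_updOp_eq [Fintype V] {G : SimpleGraph V} {f1 f2 : V → ℕ}
    {A B E : Finset V} {k : ℕ} (hk : proc2 G f1 f2 A B k = (E, E))
    (hE : updOp G f1 f2 E E = E) (n : ℕ) : proc2 G f1 f2 A B (k + n) = (E, E) := by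
  induction n with
  | zero => exact hk
  | succ n ih => rw [← add_assoc, proc2, ih, hE]

theorem vertex_cover_seeding_general {V : Type*} [Fintype V] [DecidableEq V]
    (G : SimpleGraph V) [DecidableRel G.Adj] (f1 f2 : V → ℕ)
    (C Sa Sb : Finset V)
    (hC : ∀ u v : V, G.Adj u v → u ∈ C ∨ v ∈ C)
    (hf2 : ∀ v ∈ Sa ∪ Sb, f2 v ≤ G.degree v) :
    (∀ v ∈ C,
        v ∈ (proc2 G f1 f2 (Sa ∪ (C \ Sa)) (Sb ∪ (C \ Sb)) 0).1 ∧
        v ∈ (proc2 G f1 f2 (Sa ∪ (C \ Sa)) (Sb ∪ (C \ Sb)) 0).2) ∧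
    (∀ v : V, v ∉ C → v ∈ Sa ∪ Sb →
        v ∈ (proc2 G f1 f2 (Sa ∪ (C \ Sa)) (Sb ∪ (C \ Sb)) (2 * Fintype.card V)).1 ∧
        v ∈ (proc2 G f1 f2 (Sa ∪ (C \ Sa)) (Sb ∪ (C \ Sb)) (2 * Fintype.card V)).2) ∧
    (∀ v : V, v ∉ C → v ∉ Sa ∪ Sb → f1 v ≤ G.degree v →
        v ∈ (proc2 G f1 f2 (Sa ∪ (C \ Sa)) (Sb ∪ (C \ Sb)) (2 * Fintype.card V)).1 ∧
        v ∈ (proc2 G f1 f2 (Sa ∪ (C \ Sa)) (Sb ∪ (C \ Sb)) (2 * Fintype.card V)).2) ∧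
    (∀ v : V, v ∉ C → v ∉ Sa ∪ Sb → f1 v = G.degree v + 1 →
        v ∉ (proc2 G f1 f2 (Sa ∪ (C \ Sa)) (Sb ∪ (C \ Sb)) (2 * Fintype.card V)).1 ∧
        v ∉ (proc2 G f1 f2 (Sa ∪ (C \ Sa)) (Sb ∪ (C \ Sb)) (2 * Fintype.card V)).2) := by
  have hcover : G.IsVertexCover C := fun u v huv => hC u v huv
  set E := coverClosure G f1 C (Sa ∪ Sb)
  have hfirst : proc2 G f1 f2 (Sa ∪ (C \ Sa)) (Sb ∪ (C \ Sb)) 1 = (E, E) := by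
    rw [proc2, proc2, updOp_seed_eq_coverClosure G hcover fun v hv => hf2 v (by simp [hv]),
      updOp_seed_eq_coverClosure G hcover fun v hv => hf2 v (by simp [hv]), Finset.union_comm Sb]
  have hfinal (v : V) : proc2 G f1 f2 (Sa ∪ (C \ Sa)) (Sb ∪ (C \ Sb)) (2 * Fintype.card V) =
      (E, E) := by
    have : 0 < Fintype.card V := Fintype.card_pos_iff.mpr ⟨v⟩
    rw [show 2 * Fintype.card V = 1 + (2 * Fintype.card V - 1) by omega]
    exact proc2_add_of_updOp_eq hfirst (updOp_coverClosure G hcover _) _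
  refine ⟨fun v hv => ?_, fun v _ hvS => ?_, fun v _ _ hvf => ?_, fun v hvC hvS hvf => ?_⟩
  · simp [proc2, hv]
  · rw [hfinal v]; simp [E, mem_coverClosure, hvS]
  · rw [hfinal v]; simp [E, mem_coverClosure, hvf]
  · rw [hfinal v]; simp [E, mem_coverClosure, hvC, hvS, hvf]

/-- Vertex-cover seeding: if `C` is a vertex cover and the additional seed sets are
`T_a = C \ S_a`, `T_b = C \ S_b`, then once the two-opinion process stabilizes
(after at most `2n` rounds), every vertex has both opinions or neither:
vertices of `C` have both opinions from round 0; seed vertices outside `C` acquire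
the second opinion; opinion-free vertices outside `C` with `f_1(v) ≤ deg(v)` acquire
both opinions, and those with `f_1(v) = deg(v) + 1` acquire neither. -/
theorem vertex_cover_seeding {V : Type*} [Fintype V] [DecidableEq V]
    (G : SimpleGraph V) [DecidableRel G.Adj] (f1 f2 : V → ℕ)
    (C Sa Sb : Finset V)
    (hC : ∀ u v : V, G.Adj u v → u ∈ C ∨ v ∈ C)
    (hdisj : Disjoint Sa Sb)
    (hf1 : ∀ v : V, f1 v ≤ G.degree v + 1)
    (hf2 : ∀ v ∈ Sa ∪ Sb, f2 v ≤ G.degree v) :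
    (∀ v ∈ C,
        v ∈ (proc2 G f1 f2 (Sa ∪ (C \ Sa)) (Sb ∪ (C \ Sb)) 0).1 ∧
        v ∈ (proc2 G f1 f2 (Sa ∪ (C \ Sa)) (Sb ∪ (C \ Sb)) 0).2) ∧
    (∀ v : V, v ∉ C → v ∈ Sa ∪ Sb →
        v ∈ (proc2 G f1 f2 (Sa ∪ (C \ Sa)) (Sb ∪ (C \ Sb)) (2 * Fintype.card V)).1 ∧
        v ∈ (proc2 G f1 f2 (Sa ∪ (C \ Sa)) (Sb ∪ (C \ Sb)) (2 * Fintype.card V)).2) ∧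
    (∀ v : V, v ∉ C → v ∉ Sa ∪ Sb → f1 v ≤ G.degree v →
        v ∈ (proc2 G f1 f2 (Sa ∪ (C \ Sa)) (Sb ∪ (C \ Sb)) (2 * Fintype.card V)).1 ∧
        v ∈ (proc2 G f1 f2 (Sa ∪ (C \ Sa)) (Sb ∪ (C \ Sb)) (2 * Fintype.card V)).2) ∧
    (∀ v : V, v ∉ C → v ∉ Sa ∪ Sb → f1 v = G.degree v + 1 →
        v ∉ (proc2 G f1 f2 (Sa ∪ (C \ Sa)) (Sb ∪ (C \ Sb)) (2 * Fintype.card V)).1 ∧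
        v ∉ (proc2 G f1 f2 (Sa ∪ (C \ Sa)) (Sb ∪ (C \ Sb)) (2 * Fintype.card V)).2) :=
  vertex_cover_seeding_general G f1 f2 C Sa Sb hC hf2
end

section
/- Consider the selection gadget: a graph on vertex set consisting of selection vertices I = {u_1, ..., u_m} (m ≥ 1), and two guard paths each on vertices {v_1, v_2, v_3} and {v_1', v_2', v_3'} where v_2 (resp. v_2') is adjacent to v_1, v_3 (resp. v_1', v_3') and to every selection vertex. Set S_a = {v_1, v_1'}, S_b = ∅, f_1(v_2) = f_1(v_2') = 1, f_2(v_2) = f_2(v_2') = 1, f_1(v_3) = f_1(v_3') = 1, f_2(v_3) = f_2(v_3') = 2. If T_b ∩ (I ∪ {v_1,v_2,v_3,v_1',v_2',v_3'}) = ∅ and no selection vertex ever acquires opinion b from outside, then v_3 never acquires opinion b, i.e., v_3 ∉ P_b^i for all i ≥ 0. -/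
open scoped Classical

variable {V : Type*}

/-! The path `v1 - v2 - v3` starts without opinion `b`, and its only neighbours outside the path
are selection vertices, which never hold `b`. Since every threshold is positive, a vertex with no
`b`-neighbour cannot acquire `b`, so `b` never enters the path. -/

theorem nbrCount_eq_zero_iff [Fintype V] (G : SimpleGraph V) (s : Finset V) (v : V) :
    nbrCount G s v = 0 ↔ ∀ u ∈ s, ¬ G.Adj v u := by
  rw [nbrCount, Finset.card_eq_zero, Finset.filter_eq_empty_iff]

theorem notMem_updOp_of_nbrCount_eq_zero [Fintype V] (G : SimpleGraph V) (f1 f2 : V → ℕ)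
    (Pc Pnc : Finset V) {v : V} (hf1 : 0 < f1 v) (hf2 : 0 < f2 v) (hv : v ∉ Pc)
    (hcount : nbrCount G Pc v = 0) : v ∉ updOp G f1 f2 Pc Pnc := by
  simp only [updOp, Finset.mem_union, Finset.mem_filter, Finset.mem_univ, true_and, hcount, hv,
    false_or]
  omega

theorem notMem_proc2_snd_of_shielded [Fintype V] (G : SimpleGraph V) (f1 f2 : V → ℕ)
    (Pa0 Pb0 : Finset V) (S : Set V)
    (hf1 : ∀ v ∈ S, 0 < f1 v) (hf2 : ∀ v ∈ S, 0 < f2 v) (h0 : ∀ v ∈ S, v ∉ Pb0)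
    (hshield : ∀ i, ∀ v ∈ S, ∀ u, G.Adj v u → u ∉ S → u ∉ (proc2 G f1 f2 Pa0 Pb0 i).2) :
    ∀ i, ∀ v ∈ S, v ∉ (proc2 G f1 f2 Pa0 Pb0 i).2 := by
  intro i
  induction i with
  | zero => exact h0
  | succ n ih =>
    intro v hv
    refine notMem_updOp_of_nbrCount_eq_zero G f1 f2 _ _ (hf1 v hv) (hf2 v hv) (ih v hv) ?_
    rw [nbrCount_eq_zero_iff]
    intro u hu hadj
    by_cases huS : u ∈ S
    · exact ih u huS hu
    · exact hshield n v hv u hadj huS hu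

theorem selection_gadget_v3_never_b_general {V : Type*} [Fintype V]
    (G : SimpleGraph V) (f1 f2 : V → ℕ) (I : Finset V)
    (v1 v2 v3 : V)
    (hadj1 : ∀ u : V, G.Adj v1 u ↔ u = v2)
    (hadj2 : ∀ u : V, G.Adj v2 u ↔ (u = v1 ∨ u = v3 ∨ u ∈ I))
    (hadj3 : ∀ u : V, G.Adj v3 u ↔ u = v2)
    (hf1pos : ∀ v : V, 1 ≤ f1 v) (hf2pos : ∀ v : V, 1 ≤ f2 v)
    (Pa0 Pb0 : Finset V)
    (hB1 : v1 ∉ Pb0) (hB2 : v2 ∉ Pb0) (hB3 : v3 ∉ Pb0)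
    (hBI : ∀ i : ℕ, ∀ u ∈ I, u ∉ (proc2 G f1 f2 Pa0 Pb0 i).2) :
    ∀ i : ℕ, v3 ∉ (proc2 G f1 f2 Pa0 Pb0 i).2 := by
  have hshield : ∀ i, ∀ v ∈ ({v1, v2, v3} : Set V), ∀ u, G.Adj v u →
      u ∉ ({v1, v2, v3} : Set V) → u ∉ (proc2 G f1 f2 Pa0 Pb0 i).2 := by
    rintro i v (rfl | rfl | rfl) u hadj huS
    · simp [(hadj1 u).1 hadj] at huS
    · rcases (hadj2 u).1 hadj with rfl | rfl | hu
      · simp at huS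
      · simp at huS
      · exact hBI i u hu
    · simp [(hadj3 u).1 hadj] at huS
  intro i
  refine notMem_proc2_snd_of_shielded G f1 f2 Pa0 Pb0 {v1, v2, v3}
    (fun v _ => hf1pos v) (fun v _ => hf2pos v) ?_ hshield i v3 (by simp)
  rintro v (rfl | rfl | rfl) <;> assumption

/-- Selection gadget: selection vertices `I`, two guard paths `v1-v2-v3` and
`v1'-v2'-v3'` whose central vertices `v2, v2'` are adjacent to both path endpoints
and to every selection vertex; `S_a = {v1, v1'}`, `S_b = ∅`,
`f_1(v2) = f_2(v2) = f_1(v3) = 1`, `f_2(v3) = 2` (and likewise for the primed path);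
all thresholds are positive. If the extra seed set `T_b` avoids the gadget and no
selection vertex ever acquires opinion `b` (from outside), then `v3` never acquires
opinion `b`. -/
theorem selection_gadget_v3_never_b {V : Type*} [Fintype V] [DecidableEq V]
    (G : SimpleGraph V) (f1 f2 : V → ℕ) (I : Finset V)
    (v1 v2 v3 v1' v2' v3' : V)
    (hIne : I.Nonempty)
    (hadj1 : ∀ u : V, G.Adj v1 u ↔ u = v2)
    (hadj2 : ∀ u : V, G.Adj v2 u ↔ (u = v1 ∨ u = v3 ∨ u ∈ I))
    (hadj3 : ∀ u : V, G.Adj v3 u ↔ u = v2)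
    (hadj1' : ∀ u : V, G.Adj v1' u ↔ u = v2')
    (hadj2' : ∀ u : V, G.Adj v2' u ↔ (u = v1' ∨ u = v3' ∨ u ∈ I))
    (hadj3' : ∀ u : V, G.Adj v3' u ↔ u = v2')
    (hth : f1 v2 = 1 ∧ f2 v2 = 1 ∧ f1 v3 = 1 ∧ f2 v3 = 2)
    (hth' : f1 v2' = 1 ∧ f2 v2' = 1 ∧ f1 v3' = 1 ∧ f2 v3' = 2)
    (hf1pos : ∀ v : V, 1 ≤ f1 v) (hf2pos : ∀ v : V, 1 ≤ f2 v)
    (Pa0 Pb0 : Finset V)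
    (hA : v1 ∈ Pa0) (hA' : v1' ∈ Pa0)
    (hB1 : v1 ∉ Pb0) (hB2 : v2 ∉ Pb0) (hB3 : v3 ∉ Pb0)
    (hB1' : v1' ∉ Pb0) (hB2' : v2' ∉ Pb0) (hB3' : v3' ∉ Pb0)
    (hBI : ∀ i : ℕ, ∀ u ∈ I, u ∉ (proc2 G f1 f2 Pa0 Pb0 i).2) :
    ∀ i : ℕ, v3 ∉ (proc2 G f1 f2 Pa0 Pb0 i).2 :=
  selection_gadget_v3_never_b_general G f1 f2 I v1 v2 v3 hadj1 hadj2 hadj3 hf1pos hf2pos Pa0 Pb0 hB1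
    hB2 hB3 hBI
end
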